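/- arXiv:0902.0251 — 5 statements merged into one kernel-verified Lean document; each statement's English description precedes it below -/
import Mathlib

section
/- Let v be a vertex of a countable graph with infinite degree. Then for every d ∈ ℓ²(V) with (d_{end(e)})_{e∈E} ∈ ℓ²(E) and (d_{start(e)})_{e∈E} ∈ ℓ²(E), one has d_v = 0. -/
open Filter Topology

theorem Memℓp.tendsto_cofinite_zero {α E : Type*} [NormedAddCommGroup E] {p : ENNReal}
    {f : α → E} (hf : Memℓp f p) (hp : p ≠ ⊤) : Tendsto f cofinite (𝓝 0) := by
  rcases eq_or_ne p 0 with rfl | hp₀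
  · have h_eventually_zero : ∀ᶠ i in cofinite, f i = 0 := by
      simpa [eventually_cofinite] using hf.finite_dsupport
    exact tendsto_const_nhds.congr' (h_eventually_zero.mono fun i hi => hi.symm)
  have hp_pos : 0 < p.toReal := ENNReal.toReal_pos hp₀ hp
  have h_pow : Tendsto (fun i => ‖f i‖ ^ p.toReal) cofinite (𝓝 0) :=
    (hf.summable hp_pos).tendsto_cofinite_zero
  have h_root := ((Real.continuous_rpow_const (inv_nonneg.2 hp_pos.le)).tendsto 0).comp h_pow
  rw [Real.zero_rpow (inv_ne_zero hp_pos.ne')] at h_root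
  refine tendsto_zero_iff_norm_tendsto_zero.2 (h_root.congr fun i => ?_)
  exact Real.rpow_rpow_inv (norm_nonneg _) hp_pos.ne'

theorem Memℓp.eq_zero_of_frequently_eq {α E : Type*} [NormedAddCommGroup E] {p : ENNReal}
    {f : α → E} (hf : Memℓp f p) (hp : p ≠ ⊤) {c : E} (h : ∃ᶠ i in cofinite, f i = c) :
    c = 0 :=
  (tendsto_nhds_unique_of_frequently_eq (hf.tendsto_cofinite_zero hp) tendsto_const_nhds h).symm

theorem boundary_value_vanishes_at_infinite_degree_general {V E : Type*}
    (startE endE : E → V) (v : V)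
    (hv : {e : E | startE e = v ∨ endE e = v}.Infinite)
    (d : V → ℂ)
    (hend : Memℓp (fun e : E => d (endE e)) 2)
    (hstart : Memℓp (fun e : E => d (startE e)) 2) :
    d v = 0 := by
  rcases frequently_or_distrib.1 (frequently_cofinite_iff_infinite.2 hv) with h | h
  · exact hstart.eq_zero_of_frequently_eq ENNReal.ofNat_ne_top (h.mono fun e he => by rw [he])
  · exact hend.eq_zero_of_frequently_eq ENNReal.ofNat_ne_top (h.mono fun e he => by rw [he])

/-- If `v` is a vertex of infinite degree in a countable graph, then every
`d ∈ ℓ²(V)` with `(d_{end(e)})_{e∈E} ∈ ℓ²(E)` and `(d_{start(e)})_{e∈E} ∈ ℓ²(E)` satisfies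
`d_v = 0`. -/
theorem boundary_value_vanishes_at_infinite_degree {V E : Type*} [Countable V] [Countable E]
    (startE endE : E → V) (v : V)
    (hv : {e : E | startE e = v ∨ endE e = v}.Infinite)
    (d : V → ℂ) (hd : Memℓp d 2)
    (hend : Memℓp (fun e : E => d (endE e)) 2)
    (hstart : Memℓp (fun e : E => d (startE e)) 2) :
    d v = 0 :=
  boundary_value_vanishes_at_infinite_degree_general startE endE v hv d hend hstart
end

section
/- Let G be a countable graph and G' an induced subgraph such that some vertex v on the boundary of G' has finite degree. Then there exists ψ in the form domain V such that the projection Pψ of ψ onto L²(G') is not continuous at v, i.e., Pψ ∉ V. Consequently L²(G') is not invariant under the heat semigroup. -/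
/-! Take the hat function at `v`: node value `1` at `v`, `0` elsewhere, affine on each edge. It
lies in the form domain because only the finitely many edges at `v` carry it. Every element of
the form domain has a single value at `v`, but the projection of the hat function has trace `1`
at `v` along an edge of `G'` and trace `0` along the edge leaving `G'`. -/

open scoped Classical

/-- `ψ` is in the form domain `V` of the network: each `ψ_e ∈ H¹(0,1)` (witnessed by a
derivative `g_e`), the `H¹`-norms are square-summable, and `ψ` is continuous in the nodes with
node values `dψ ∈ ℓ²(V)` matching the traces at the start and end vertices. -/
def InFormDomain {V E : Type*} (startE endE : E → V) (ψ : E → ℝ → ℂ) (dψ : V → ℂ) : Prop :=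
  (∃ g : E → ℝ → ℂ, (∀ e t, HasDerivAt (ψ e) (g e t) t) ∧
      Summable (fun e : E =>
        (∫ t in (0:ℝ)..1, ‖ψ e t‖ ^ 2) + ∫ t in (0:ℝ)..1, ‖g e t‖ ^ 2)) ∧
  Memℓp dψ 2 ∧ ∀ e, ψ e 0 = dψ (startE e) ∧ ψ e 1 = dψ (endE e)

def edgeInterpolation {V E : Type*} (startE endE : E → V) (d : V → ℂ) : E → ℝ → ℂ :=
  fun e t => d (startE e) + (d (endE e) - d (startE e)) * t

def ContinuousAtVertex {V E : Type*} (startE endE : E → V) (ψ : E → ℝ → ℂ) (v : V) : Prop :=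
  ∃ c : ℂ, ∀ e, (startE e = v → ψ e 0 = c) ∧ (endE e = v → ψ e 1 = c)

section

variable {V E : Type*} (startE endE : E → V)

@[simp]
theorem edgeInterpolation_zero (d : V → ℂ) (e : E) :
    edgeInterpolation startE endE d e 0 = d (startE e) := by
  simp [edgeInterpolation]

@[simp]
theorem edgeInterpolation_one (d : V → ℂ) (e : E) :
    edgeInterpolation startE endE d e 1 = d (endE e) := by
  simp [edgeInterpolation]

theorem hasDerivAt_edgeInterpolation (d : V → ℂ) (e : E) (t : ℝ) :
    HasDerivAt (edgeInterpolation startE endE d e) (d (endE e) - d (startE e)) t := by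
  unfold edgeInterpolation
  simpa using ((Complex.ofRealCLM.hasDerivAt (x := t)).const_mul
    (d (endE e) - d (startE e))).const_add (d (startE e))

theorem inFormDomain_edgeInterpolation {d : V → ℂ} (hd : Memℓp d 2)
    (hfin : {e : E | d (startE e) ≠ 0 ∨ d (endE e) ≠ 0}.Finite) :
    InFormDomain startE endE (edgeInterpolation startE endE d) d := by
  refine ⟨⟨fun e _ => d (endE e) - d (startE e), fun e t ↦
    hasDerivAt_edgeInterpolation startE endE d e t, ?_⟩, hd, fun e ↦ by simp⟩
  refine summable_of_ne_finset_zero (s := hfin.toFinset) fun e he ↦ ?_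
  obtain ⟨hs, he⟩ : d (startE e) = 0 ∧ d (endE e) = 0 := by simpa [not_or] using he
  simp [edgeInterpolation, hs, he]

theorem inFormDomain_edgeInterpolation_single {v : V}
    (hfin : {e : E | startE e = v ∨ endE e = v}.Finite) :
    InFormDomain startE endE (edgeInterpolation startE endE (Pi.single v 1)) (Pi.single v 1) := by
  refine inFormDomain_edgeInterpolation startE endE ?_ (by simpa [Pi.single_apply] using hfin)
  exact (memℓp_zero (by simp [Pi.single_apply])).of_exponent_ge bot_le

theorem InFormDomain.continuousAtVertex {ψ : E → ℝ → ℂ} {d : V → ℂ}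
    (h : InFormDomain startE endE ψ d) (v : V) : ContinuousAtVertex startE endE ψ v :=
  ⟨d v, fun e ↦ ⟨fun he ↦ he ▸ (h.2.2 e).1, fun he ↦ he ▸ (h.2.2 e).2⟩⟩

variable {startE endE}

theorem ContinuousAtVertex.traces_eq_zero {ψ : E → ℝ → ℂ} {v : V}
    (h : ContinuousAtVertex startE endE ψ v) {e₀ : E} (he₀ : startE e₀ = v ∨ endE e₀ = v)
    (hψ : ψ e₀ = 0) (e : E) : (startE e = v → ψ e 0 = 0) ∧ (endE e = v → ψ e 1 = 0) := by
  obtain ⟨c, hc⟩ := h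
  obtain rfl : c = 0 := by
    rcases he₀ with he₀ | he₀
    · simpa [hψ] using ((hc e₀).1 he₀).symm
    · simpa [hψ] using ((hc e₀).2 he₀).symm
  exact hc e

end

theorem projection_fails_at_finite_degree_boundary_general {V E : Type*}
    (startE endE : E → V) (V' : Set V) (v : V)
    (hfin : {e : E | startE e = v ∨ endE e = v}.Finite)
    (hin : ∃ e : E, (startE e ∈ V' ∧ endE e ∈ V') ∧ (startE e = v ∨ endE e = v))
    (hadj : ∃ w ∉ V', ∃ e : E, (startE e = v ∧ endE e = w) ∨ (startE e = w ∧ endE e = v)) :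
    ∃ (ψ : E → ℝ → ℂ) (dψ : V → ℂ), InFormDomain startE endE ψ dψ ∧
      ¬ ∃ d' : V → ℂ, InFormDomain startE endE
          (fun e : E => if startE e ∈ V' ∧ endE e ∈ V' then ψ e else 0) d' := by
  obtain ⟨e₀, he₀V', he₀v⟩ := hin
  obtain ⟨w, hw, e₁, he₁⟩ := hadj
  refine ⟨_, _, inFormDomain_edgeInterpolation_single startE endE hfin, ?_⟩
  rintro ⟨d', hP⟩
  have he₁V' : ¬(startE e₁ ∈ V' ∧ endE e₁ ∈ V') := by
    rintro ⟨hs, he⟩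
    rcases he₁ with ⟨-, rfl⟩ | ⟨rfl, -⟩ <;> contradiction
  have he₁v : startE e₁ = v ∨ endE e₁ = v := by tauto
  have hzero := (hP.continuousAtVertex startE endE v).traces_eq_zero he₁v
    (by simp only [if_neg he₁V']) e₀
  simp only [if_pos he₀V'] at hzero
  rcases he₀v with h | h
  · simpa [h] using hzero.1 h
  · simpa [h] using hzero.2 h

/-- Let `G'` be the subgraph induced by `V'` and let `v` be a boundary vertex of
`G'` (i.e. `v ∈ V'` is incident to an edge of `G'` and adjacent to a vertex outside `V'`) of
finite degree. Then there exists `ψ` in the form domain whose projection onto `L²(G')` is not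
continuous at `v`, i.e. `Pψ` is not in the form domain; consequently `L²(G')` is not invariant
under the heat semigroup. -/
theorem projection_fails_at_finite_degree_boundary {V E : Type*} [Countable V] [Countable E]
    (startE endE : E → V) (V' : Set V) (v : V) (hv : v ∈ V')
    (hfin : {e : E | startE e = v ∨ endE e = v}.Finite)
    (hin : ∃ e : E, (startE e ∈ V' ∧ endE e ∈ V') ∧ (startE e = v ∨ endE e = v))
    (hadj : ∃ w ∉ V', ∃ e : E, (startE e = v ∧ endE e = w) ∨ (startE e = w ∧ endE e = v)) :
    ∃ (ψ : E → ℝ → ℂ) (dψ : V → ℂ), InFormDomain startE endE ψ dψ ∧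
      ¬ ∃ d' : V → ℂ, InFormDomain startE endE
          (fun e : E => if startE e ∈ V' ∧ endE e ∈ V' then ψ e else 0) d' :=
  projection_fails_at_finite_degree_boundary_general startE endE V' v hfin hin hadj
end

section
/- Let G be a countable graph, e an edge, and Sfin(e) the finite span of e. Then every vertex on the boundary of Sfin(e) has infinite degree. -/
/-- The edge `e` is incident to the vertex `v`. -/
def Inc {V E : Type*} (startE endE : E → V) (v : V) (e : E) : Prop :=
  startE e = v ∨ endE e = v

/-- One step of a path of finite weight: the edges `a` and `b` share a vertex of finite
degree (no infinite star is crossed). -/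
def FinStep {V E : Type*} (startE endE : E → V) (a b : E) : Prop :=
  ∃ v : V, Inc startE endE v a ∧ Inc startE endE v b ∧
    {f : E | Inc startE endE v f}.Finite

/-- The finite span `Sfin(e)`: the set of edges joined to `e` by a path of finite weight
(including `e` itself, via the empty path). -/
def Sfin {V E : Type*} (startE endE : E → V) (e : E) : Set E :=
  {e' : E | Relation.ReflTransGen (FinStep startE endE) e e'}

theorem mem_Sfin_of_inc_of_finite {V E : Type*} {startE endE : E → V} {e a b : E} {v : V}
    (ha : a ∈ Sfin startE endE e) (hav : Inc startE endE v a) (hbv : Inc startE endE v b)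
    (hv : {f : E | Inc startE endE v f}.Finite) :
    b ∈ Sfin startE endE e :=
  Relation.ReflTransGen.tail ha ⟨v, hav, hbv, hv⟩

theorem boundary_of_finite_span_has_infinite_degree_general {V E : Type*}
    (startE endE : E → V) (e : E) (v : V)
    (h₁ : ∃ a ∈ Sfin startE endE e, Inc startE endE v a)
    (h₂ : ∃ b ∉ Sfin startE endE e, Inc startE endE v b) :
    {f : E | Inc startE endE v f}.Infinite := by
  obtain ⟨a, ha, hav⟩ := h₁
  obtain ⟨b, hb, hbv⟩ := h₂
  exact fun hv ↦ hb (mem_Sfin_of_inc_of_finite ha hav hbv hv)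

/-- Every vertex on the boundary of the finite span `Sfin(e)` (a vertex incident
both to an edge of `Sfin(e)` and to an edge outside of it) has infinite degree. -/
theorem boundary_of_finite_span_has_infinite_degree {V E : Type*} [Countable V] [Countable E]
    (startE endE : E → V) (e : E) (v : V)
    (h₁ : ∃ a ∈ Sfin startE endE e, Inc startE endE v a)
    (h₂ : ∃ b ∉ Sfin startE endE e, Inc startE endE v b) :
    {f : E | Inc startE endE v f}.Infinite :=
  boundary_of_finite_span_has_infinite_degree_general startE endE e v h₁ h₂
end

section
/- Let G be a connected countable graph and G' a connected subgraph. Then G' is the finite span Sfin(e') of each of its edges if and only if (1) every vertex on the boundary of G' has infinite degree and (2) any two edges of G' are joined by a path of finite weight. -/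
/-! Condition (1) says exactly that no finite-weight step leaves `S`, since such a step would
pass through a boundary vertex of finite degree. Hence `Sfin e ⊆ S` for `e ∈ S`, and (2) is the
reverse inclusion. -/

section FiniteSpan

variable {V E : Type*} (startE endE : E → V)

theorem mem_Sfin_of_finStep {a b : E} (h : FinStep startE endE a b) : b ∈ Sfin startE endE a :=
  Relation.ReflTransGen.single h

theorem Sfin_subset_of_finStep_closed {S : Set E}
    (hS : ∀ a b, a ∈ S → FinStep startE endE a b → b ∈ S) {e : E} (he : e ∈ S) :
    Sfin startE endE e ⊆ S := by
  intro x hx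
  induction hx with
  | refl => exact he
  | tail _ hstep ih => exact hS _ _ ih hstep

theorem finStep_closed_of_boundary_infinite {S : Set E}
    (hbd : ∀ v : V, (∃ a ∈ S, Inc startE endE v a) → (∃ b ∉ S, Inc startE endE v b) →
      {f : E | Inc startE endE v f}.Infinite) :
    ∀ a b, a ∈ S → FinStep startE endE a b → b ∈ S := by
  rintro a b ha ⟨v, hva, hvb, hfin⟩
  by_contra hb
  exact hbd v ⟨a, ha, hva⟩ ⟨b, hb, hvb⟩ hfin

end FiniteSpan

theorem finite_span_characterization_general {V E : Type*}
    (startE endE : E → V) (S : Set E) :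
    (∀ e' ∈ S, Sfin startE endE e' = S) ↔
      ((∀ v : V, (∃ a ∈ S, Inc startE endE v a) → (∃ b ∉ S, Inc startE endE v b) →
          {f : E | Inc startE endE v f}.Infinite) ∧
       (∀ a ∈ S, ∀ b ∈ S, b ∈ Sfin startE endE a)) := by
  constructor
  · intro hspan
    refine ⟨?_, fun a ha b hb => (hspan a ha).symm ▸ hb⟩
    rintro v ⟨a, ha, hva⟩ ⟨b, hb, hvb⟩ hfin
    exact hb (hspan a ha ▸ mem_Sfin_of_finStep startE endE ⟨v, hva, hvb, hfin⟩)
  · rintro ⟨hbd, hjoin⟩ e he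
    exact (Sfin_subset_of_finStep_closed startE endE
      (finStep_closed_of_boundary_infinite startE endE hbd) he).antisymm (hjoin e he)

/-- Let `G` be a connected countable graph and `S` (the edge set of) a connected
subgraph. Then `S` is the finite span of each of its edges if and only if (1) every vertex on
the boundary of `S` has infinite degree, and (2) any two edges of `S` are joined by a path of
finite weight. -/
theorem finite_span_characterization {V E : Type*} [Countable V] [Countable E]
    (startE endE : E → V) (S : Set E)
    (hG : ∀ a b : E, Relation.ReflTransGen
      (fun x y : E => ∃ v : V, Inc startE endE v x ∧ Inc startE endE v y) a b)
    (hS : ∀ a ∈ S, ∀ b ∈ S, Relation.ReflTransGen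
      (fun x y : E => x ∈ S ∧ y ∈ S ∧ ∃ v : V, Inc startE endE v x ∧ Inc startE endE v y) a b) :
    (∀ e' ∈ S, Sfin startE endE e' = S) ↔
      ((∀ v : V, (∃ a ∈ S, Inc startE endE v a) → (∃ b ∉ S, Inc startE endE v b) →
          {f : E | Inc startE endE v f}.Infinite) ∧
       (∀ a ∈ S, ∀ b ∈ S, b ∈ Sfin startE endE a)) :=
  finite_span_characterization_general startE endE S
end

section
/- Let G be a connected countable graph and G' a connected subgraph all of whose boundary vertices have infinite degree. Then for every edge e of G', the finite span Sfin(e) is contained in G'. -/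
theorem Relation.ReflTransGen.mem_of_mem {α : Type*} {r : α → α → Prop} {S : Set α} {a b : α}
    (hr : ∀ ⦃x y⦄, r x y → x ∈ S → y ∈ S) (h : Relation.ReflTransGen r a b) (ha : a ∈ S) :
    b ∈ S := by
  induction h with
  | refl => exact ha
  | tail _ hstep ih => exact hr hstep ih

-- The shared vertex has finite degree, so it is not a boundary vertex of `S`.
theorem mem_of_finStep {V E : Type*} {startE endE : E → V} {S : Set E}
    (hb : ∀ v : V, (∃ a ∈ S, Inc startE endE v a) → (∃ b ∉ S, Inc startE endE v b) →
      {f : E | Inc startE endE v f}.Infinite)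
    ⦃a b : E⦄ (hab : FinStep startE endE a b) (ha : a ∈ S) : b ∈ S := by
  obtain ⟨v, hva, hvb, hfin⟩ := hab
  by_contra hbS
  exact hb v ⟨a, ha, hva⟩ ⟨b, hbS, hvb⟩ hfin

theorem finite_span_subset_of_infinite_boundary_general {V E : Type*}
    (startE endE : E → V) (S : Set E)
    (hb : ∀ v : V, (∃ a ∈ S, Inc startE endE v a) → (∃ b ∉ S, Inc startE endE v b) →
      {f : E | Inc startE endE v f}.Infinite) :
    ∀ e ∈ S, Sfin startE endE e ⊆ S :=
  fun _ he _ he' => Relation.ReflTransGen.mem_of_mem (mem_of_finStep hb) he' he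

/-- Let `G` be a connected countable graph and `S` (the edge set of) a connected
subgraph all of whose boundary vertices have infinite degree. Then for every edge `e` of `S`,
the finite span `Sfin(e)` is contained in `S`. -/
theorem finite_span_subset_of_infinite_boundary {V E : Type*} [Countable V] [Countable E]
    (startE endE : E → V) (S : Set E)
    (hG : ∀ a b : E, Relation.ReflTransGen
      (fun x y : E => ∃ v : V, Inc startE endE v x ∧ Inc startE endE v y) a b)
    (hS : ∀ a ∈ S, ∀ b ∈ S, Relation.ReflTransGen
      (fun x y : E => x ∈ S ∧ y ∈ S ∧ ∃ v : V, Inc startE endE v x ∧ Inc startE endE v y) a b)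
    (hb : ∀ v : V, (∃ a ∈ S, Inc startE endE v a) → (∃ b ∉ S, Inc startE endE v b) →
      {f : E | Inc startE endE v f}.Infinite) :
    ∀ e ∈ S, Sfin startE endE e ⊆ S :=
  finite_span_subset_of_infinite_boundary_general startE endE S hb
end
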